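/- For every ordinal α < ε₀ and every natural number n, F_α(n) = H_(ω^α)(n), where F denotes the fast-growing (Wainer) hierarchy and H denotes the Hardy hierarchy. -/
import Mathlib


/-- Terms denoting ordinals below `ε₀`: `zero` is `0`, and `cons a b` is `ω^a + b`. -/
inductive T where
  | zero : T
  | cons (a b : T) : T
deriving DecidableEq

/-- Comparison of terms (correct on terms in Cantor normal form). -/
def T.lt : T → T → Prop
  | _, .zero => False
  | .zero, .cons _ _ => True
  | .cons a b, .cons c d => T.lt a c ∨ (a = c ∧ T.lt b d)

def T.le (x y : T) : Prop := T.lt x y ∨ x = y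

/-- Cantor normal form: exponents are nonincreasing. -/
def T.NF : T → Prop
  | .zero => True
  | .cons a b => a.NF ∧ b.NF ∧ ∀ c d : T, b = .cons c d → ¬ T.lt a c

/-- A term denotes a limit ordinal iff it is nonzero and its last exponent is nonzero. -/
def T.isLimit : T → Bool
  | .zero => false
  | .cons a .zero => a ≠ .zero
  | .cons _ b => b.isLimit

/-- Predecessor of a successor-ordinal term (junk value otherwise). -/
def T.pred : T → T
  | .zero => .zero
  | .cons .zero .zero => .zero
  | .cons a .zero => .cons a .zero
  | .cons a b => .cons a (T.pred b)

/-- The term `α + 1`. -/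
def T.addOne : T → T
  | .zero => .cons .zero .zero
  | .cons a b => .cons a (T.addOne b)

/-- The term `ω^a * n`. -/
def T.omegaPowMul (a : T) : ℕ → T
  | 0 => .zero
  | n + 1 => .cons a (T.omegaPowMul a n)

/-- The canonical (fundamental) sequence: `[ω^α + β]_n = ω^α + [β]_n` for limit `β`;
`[ω^(α+1)]_n = ω^α · n`; `[ω^α]_n = ω^([α]_n)` for limit `α`.
(Junk value on non-limit terms.) -/
def T.fund : T → ℕ → T
  | .zero, _ => .zero
  | .cons a (.cons c d), n => .cons a (T.fund (.cons c d) n)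
  | .cons a .zero, n =>
    if a.isLimit then .cons (T.fund a n) .zero
    else match a with
      | .zero => .zero
      | .cons _ _ => T.omegaPowMul a.pred n

mutual
/-- Graph of the fast-growing (Wainer) hierarchy: `FG α n m` means `F_α(n) = m`. -/
inductive FG : T → ℕ → ℕ → Prop where
  | zero (n : ℕ) : FG .zero n (n + 1)
  | succ {α : T} {n m : ℕ} : α ≠ .zero → α.isLimit = false →
      FGIter α.pred n n m → FG α n m
  | limit {α : T} {n m : ℕ} : α.isLimit = true → FG (α.fund n) n m → FG α n m

/-- `FGIter α k n m` means `F_α` iterated `k` times maps `n` to `m`. -/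
inductive FGIter : T → ℕ → ℕ → ℕ → Prop where
  | refl (α : T) (n : ℕ) : FGIter α 0 n n
  | step {α : T} {k n m p : ℕ} : FGIter α k n m → FG α m p → FGIter α (k + 1) n p
end

/-- Graph of the Hardy hierarchy: `HG α n m` means `H_α(n) = m`. -/
inductive HG : T → ℕ → ℕ → Prop where
  | zero (n : ℕ) : HG .zero n n
  | succ {α : T} {n m : ℕ} : α ≠ .zero → α.isLimit = false →
      HG α.pred (n + 1) m → HG α n m
  | limit {α : T} {n m : ℕ} : α.isLimit = true → HG (α.fund n) n m → HG α n m

/-- Composition semantics: `cons a b` denotes `F_a ∘ (semantics of b)`. -/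
def FGC : T → ℕ → ℕ → Prop
  | .zero, n, m => m = n
  | .cons a b, n, m => ∃ k, FGC b n k ∧ FG a k m

theorem fgc_omegaPowMul (k : ℕ) : ∀ {γ : T} {n m : ℕ},
    FGC (T.omegaPowMul γ k) n m ↔ FGIter γ k n m := by
  induction k with
  | zero =>
    intro γ n m
    constructor
    · intro h
      have : m = n := h
      subst this; exact FGIter.refl γ _
    · intro h
      cases h
      rfl
  | succ k ih =>
    intro γ n m
    constructor
    · rintro ⟨p, hp, hf⟩
      exact FGIter.step (ih.mp hp) hf
    · intro h
      cases h with
      | step hiter hf => exact ⟨_, ih.mpr hiter, hf⟩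

theorem fgc_step : ∀ (b : T) (n m : ℕ),
    (b ≠ .zero → b.isLimit = false → FGC b.pred (n + 1) m → FGC b n m) ∧
    (b.isLimit = true → FGC (b.fund n) n m → FGC b n m) := by
  intro b
  induction b with
  | zero =>
    intro n m
    constructor
    · intro h; exact absurd rfl h
    · intro h; simp [T.isLimit] at h
  | cons a b iha ihb =>
    intro n m
    match b with
    | .zero =>
      match a with
      | .zero =>
        constructor
        · intro _ _ h
          have hm : m = n + 1 := h
          exact ⟨n, rfl, hm ▸ FG.zero n⟩
        · intro h; simp [T.isLimit] at h
      | .cons c d =>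
        constructor
        · intro _ hlim
          simp [T.isLimit] at hlim
        · intro _ h
          by_cases ha : (T.cons c d).isLimit = true
          · rw [show T.fund (T.cons (T.cons c d) .zero) n
                = T.cons (T.fund (T.cons c d) n) .zero by simp [T.fund, ha]] at h
            obtain ⟨k, hk, hf⟩ := h
            have hkn : k = n := hk
            subst hkn
            exact ⟨k, rfl, FG.limit ha hf⟩
          · rw [show T.fund (T.cons (T.cons c d) .zero) n
                = T.omegaPowMul (T.cons c d).pred n by
              simp [T.fund, eq_false_of_ne_true ha]] at h
            exact ⟨n, rfl, FG.succ (by simp) (eq_false_of_ne_true ha)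
              ((fgc_omegaPowMul n).mp h)⟩
    | .cons c d =>
      constructor
      · intro _ hlim h
        have hlim' : (T.cons c d).isLimit = false := hlim
        rw [show (T.cons a (T.cons c d)).pred = T.cons a (T.cons c d).pred by simp [T.pred]] at h
        obtain ⟨k, hk, hf⟩ := h
        exact ⟨k, ((ihb n k).1 (by simp) hlim' hk), hf⟩
      · intro hlim h
        have hlim' : (T.cons c d).isLimit = true := hlim
        obtain ⟨k, hk, hf⟩ := h
        exact ⟨k, ((ihb n k).2 hlim' hk), hf⟩

theorem hg_to_fgc {b : T} {n m : ℕ} (h : HG b n m) : FGC b n m := by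
  induction h with
  | zero n => rfl
  | succ hne hlim _ ih => exact (fgc_step _ _ _).1 hne hlim ih
  | limit hlim _ ih => exact (fgc_step _ _ _).2 hlim ih

theorem hg_compose {a b : T} {n k m : ℕ} (h : HG b n k)
    (h2 : HG (T.cons a .zero) k m) : HG (T.cons a b) n m := by
  induction h with
  | zero => exact h2
  | @succ b n k hne hlim _ ih =>
    match b, hne with
    | .cons c d, _ =>
      exact HG.succ (by simp) hlim
        ((show (T.cons a (T.cons c d)).pred = T.cons a (T.cons c d).pred by simp [T.pred]) ▸ ih h2)
  | @limit b n k hlim _ ih =>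
    match b, hlim with
    | .cons c d, hlim =>
      exact HG.limit hlim (ih h2)

theorem fg_to_hg {α : T} {n m : ℕ} (h : FG α n m) : HG (T.cons α .zero) n m := by
  refine @FG.rec (fun α n m _ => HG (T.cons α .zero) n m)
    (fun α k n m _ => HG (T.omegaPowMul α k) n m) ?_ ?_ ?_ ?_ ?_ α n m h
  · intro n
    exact HG.succ (by simp) (by simp [T.isLimit]) (HG.zero (n + 1))
  · intro α n m hne hlim _ ih
    cases α with
    | zero => exact absurd rfl hne
    | cons c d =>
      apply HG.limit (by simp [T.isLimit])
      rw [show T.fund (T.cons (T.cons c d) .zero) n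
          = T.omegaPowMul (T.cons c d).pred n by simp [T.fund, hlim]]
      exact ih
  · intro α n m hlim _ ih
    cases α with
    | zero => simp [T.isLimit] at hlim
    | cons c d =>
      apply HG.limit (by simp [T.isLimit])
      rw [show T.fund (T.cons (T.cons c d) .zero) n
          = T.cons (T.fund (T.cons c d) n) .zero by simp [T.fund, hlim]]
      exact ih
  · intro α n
    exact HG.zero n
  · intro α k n m p _ _ ih1 ih2
    exact hg_compose ih1 ih2

/-- For every `α < ε₀` and every `n`, we have `F_α(n) = H_{ω^α}(n)`. -/
theorem fastGrowing_eq_hardy_omegaPow (α : T) (hα : α.NF) (n m : ℕ) :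
    FG α n m ↔ HG (T.cons α .zero) n m := by
  constructor
  · exact fg_to_hg
  · intro h
    obtain ⟨k, hk, hf⟩ := hg_to_fgc h
    have : k = n := hk
    subst this
    exact hf
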